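/- Every quasitriangular structure R on a bialgebra H is a Drinfel'd twist on H: R is normalized, (ε⊗Id)(R) = 1 = (Id⊗ε)(R), and satisfies the 2-cocycle identity R₁₂·(Δ⊗Id)(R) = R₂₃·(Id⊗Δ)(R). -/

import Mathlib

open scoped TensorProduct

noncomputable section

variable (k H : Type*) [CommRing k] [Ring H] [Bialgebra k H]

/-- leg embedding `a ⊗ b ↦ a ⊗ b ⊗ 1` into `H ⊗ (H ⊗ H)`. -/
def leg12 : H ⊗[k] H →ₐ[k] H ⊗[k] (H ⊗[k] H) :=
  Algebra.TensorProduct.map (AlgHom.id k H) Algebra.TensorProduct.includeLeft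

/-- leg embedding `a ⊗ b ↦ 1 ⊗ a ⊗ b`. -/
def leg23 : H ⊗[k] H →ₐ[k] H ⊗[k] (H ⊗[k] H) :=
  Algebra.TensorProduct.includeRight

/-- leg embedding `a ⊗ b ↦ a ⊗ 1 ⊗ b`. -/
def leg13 : H ⊗[k] H →ₐ[k] H ⊗[k] (H ⊗[k] H) :=
  Algebra.TensorProduct.map (AlgHom.id k H) Algebra.TensorProduct.includeRight

/-- `(Id ⊗ Δ)` as an algebra map `H ⊗ H → H ⊗ (H ⊗ H)`. -/
def idComul : H ⊗[k] H →ₐ[k] H ⊗[k] (H ⊗[k] H) :=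
  Algebra.TensorProduct.map (AlgHom.id k H) (Bialgebra.comulAlgHom k H)

/-- `(Δ ⊗ Id)` as an algebra map `H ⊗ H → H ⊗ (H ⊗ H)` (after reassociation). -/
def comulId : H ⊗[k] H →ₐ[k] H ⊗[k] (H ⊗[k] H) :=
  (Algebra.TensorProduct.assoc k k k H H H).toAlgHom.comp
    (Algebra.TensorProduct.map (Bialgebra.comulAlgHom k H) (AlgHom.id k H))

/-- the flip `a ⊗ b ↦ b ⊗ a` as an algebra map. -/
def swapT : H ⊗[k] H →ₐ[k] H ⊗[k] H := (Algebra.TensorProduct.comm k H H).toAlgHom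

/-- A quasitriangular structure on the bialgebra `H`. -/
structure QT where
  R : H ⊗[k] H
  Rinv : H ⊗[k] H
  mul_inv : R * Rinv = 1
  inv_mul : Rinv * R = 1
  quasi_cocomm : ∀ h : H, swapT k H (Coalgebra.comul (R := k) h) * R = R * Coalgebra.comul (R := k) h
  hex1 : idComul k H R = leg13 k H R * leg12 k H R
  hex2 : comulId k H R = leg13 k H R * leg23 k H R

/-- A pre-Cartier quasitriangular bialgebra structure on `H`. -/
structure PreCartier extends QT k H where
  χ : H ⊗[k] H
  chi_comm : ∀ h : H, χ * Coalgebra.comul (R := k) h = Coalgebra.comul (R := k) h * χ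
  chi_hex1 : idComul k H χ = leg12 k H χ + leg12 k H Rinv * leg13 k H χ * leg12 k H R
  chi_hex2 : comulId k H χ = leg23 k H χ + leg23 k H Rinv * leg13 k H χ * leg23 k H R

/-! Normalization: apply `ε ⊗ Id ⊗ Id` to `(Δ ⊗ Id)(R) = R₁₃R₂₃`, which gives
`R = (1 ⊗ (ε ⊗ Id)(R)) · R`, and cancel the invertible `R`; symmetrically with
`Id ⊗ Id ⊗ ε` and `(Id ⊗ Δ)(R) = R₁₃R₁₂`.
Cocycle identity: with `τ₁₂` the flip of the first two legs, quasi-cocommutativity turns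
`R₁₂ · (Δ ⊗ Id)(R)` into
`τ₁₂((Δ ⊗ Id)(R)) · R₁₂ = τ₁₂(R₁₃R₂₃) · R₁₂ = R₂₃R₁₃R₁₂ = R₂₃ · (Id ⊗ Δ)(R)`. -/

def counitLeft : H ⊗[k] H →ₗ[k] H :=
  (TensorProduct.lid k H).toLinearMap ∘ₗ (Coalgebra.counit (R := k) (A := H)).rTensor H

def counitRight : H ⊗[k] H →ₗ[k] H :=
  (TensorProduct.rid k H).toLinearMap ∘ₗ (Coalgebra.counit (R := k) (A := H)).lTensor H

def counitLeg1 : H ⊗[k] (H ⊗[k] H) →ₐ[k] H ⊗[k] H :=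
  (Algebra.TensorProduct.lid k (H ⊗[k] H)).toAlgHom.comp
    (Algebra.TensorProduct.map (Bialgebra.counitAlgHom k H) (AlgHom.id k _))

def counitLeg3 : H ⊗[k] (H ⊗[k] H) →ₐ[k] H ⊗[k] H :=
  Algebra.TensorProduct.map (AlgHom.id k H)
    ((Algebra.TensorProduct.rid k k H).toAlgHom.comp
      (Algebra.TensorProduct.map (AlgHom.id k H) (Bialgebra.counitAlgHom k H)))

def swapLeg12 : H ⊗[k] (H ⊗[k] H) →ₐ[k] H ⊗[k] (H ⊗[k] H) :=
  ((Algebra.TensorProduct.assoc k k k H H H).toAlgHom.comp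
    (Algebra.TensorProduct.map (swapT k H) (AlgHom.id k H))).comp
    (Algebra.TensorProduct.assoc k k k H H H).symm.toAlgHom

section

variable {k H}

@[simp]
lemma counitLeft_tmul (a b : H) :
    counitLeft k H (a ⊗ₜ b) = Coalgebra.counit (R := k) a • b :=
  rfl

@[simp]
lemma counitRight_tmul (a b : H) :
    counitRight k H (a ⊗ₜ b) = Coalgebra.counit (R := k) b • a :=
  rfl

@[simp]
lemma counitLeg1_tmul (a : H) (y : H ⊗[k] H) :
    counitLeg1 k H (a ⊗ₜ y) = Coalgebra.counit (R := k) a • y := by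
  simp [counitLeg1]

@[simp]
lemma counitLeg3_tmul (a : H) (y : H ⊗[k] H) :
    counitLeg3 k H (a ⊗ₜ y) = a ⊗ₜ counitRight k H y := by
  induction y using TensorProduct.induction_on with
  | zero => simp
  | tmul b c => simp [counitLeg3, TensorProduct.tmul_smul]
  | add y z hy hz => simp [TensorProduct.tmul_add, hy, hz]

@[simp]
lemma swapLeg12_tmul (a b c : H) : swapLeg12 k H (a ⊗ₜ (b ⊗ₜ c)) = b ⊗ₜ (a ⊗ₜ c) := by
  simp [swapLeg12, swapT]

lemma comulId_tmul (a c : H) :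
    comulId k H (a ⊗ₜ c) =
      Algebra.TensorProduct.assoc k k k H H H (Coalgebra.comul (R := k) a ⊗ₜ c) := by
  simp [comulId, Bialgebra.comulAlgHom_apply]

lemma idComul_tmul (a c : H) : idComul k H (a ⊗ₜ c) = a ⊗ₜ Coalgebra.comul (R := k) c := by
  simp [idComul, Bialgebra.comulAlgHom_apply]

lemma counitLeft_comul (a : H) : counitLeft k H (Coalgebra.comul (R := k) a) = a := by
  simp [counitLeft, Coalgebra.rTensor_counit_comul]

lemma counitRight_comul (a : H) : counitRight k H (Coalgebra.comul (R := k) a) = a := by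
  simp [counitRight, Coalgebra.lTensor_counit_comul]

lemma counitLeg1_assoc (y : H ⊗[k] H) (c : H) :
    counitLeg1 k H (Algebra.TensorProduct.assoc k k k H H H (y ⊗ₜ c)) =
      counitLeft k H y ⊗ₜ c := by
  induction y using TensorProduct.induction_on with
  | zero => simp
  | tmul a b => simp [TensorProduct.smul_tmul']
  | add y z hy hz => simp [TensorProduct.add_tmul, hy, hz]

lemma counitLeg1_comulId (x : H ⊗[k] H) : counitLeg1 k H (comulId k H x) = x := by
  induction x using TensorProduct.induction_on with
  | zero => simp
  | tmul a c => rw [comulId_tmul, counitLeg1_assoc, counitLeft_comul]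
  | add x y hx hy => simp [hx, hy]

lemma counitLeg3_idComul (x : H ⊗[k] H) : counitLeg3 k H (idComul k H x) = x := by
  induction x using TensorProduct.induction_on with
  | zero => simp
  | tmul a c => rw [idComul_tmul, counitLeg3_tmul, counitRight_comul]
  | add x y hx hy => simp [hx, hy]

lemma counitLeg1_leg23 (x : H ⊗[k] H) : counitLeg1 k H (leg23 k H x) = x := by
  simp [leg23]

lemma counitLeg1_leg13 (x : H ⊗[k] H) :
    counitLeg1 k H (leg13 k H x) = (1 : H) ⊗ₜ counitLeft k H x := by
  induction x using TensorProduct.induction_on with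
  | zero => simp
  | tmul a b => simp [leg13, TensorProduct.tmul_smul]
  | add x y hx hy => simp [hx, hy, TensorProduct.tmul_add]

lemma counitLeg3_leg12 (x : H ⊗[k] H) : counitLeg3 k H (leg12 k H x) = x := by
  induction x using TensorProduct.induction_on with
  | zero => simp
  | tmul a b => simp [leg12]
  | add x y hx hy => simp [hx, hy]

lemma counitLeg3_leg13 (x : H ⊗[k] H) :
    counitLeg3 k H (leg13 k H x) = counitRight k H x ⊗ₜ (1 : H) := by
  induction x using TensorProduct.induction_on with
  | zero => simp
  | tmul a b => simp [leg13, TensorProduct.smul_tmul', TensorProduct.tmul_smul]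
  | add x y hx hy => simp [hx, hy, TensorProduct.add_tmul]

lemma rTensor_counit_eq_of_comulId_eq {R : H ⊗[k] H} (hR : IsUnit R)
    (hex : comulId k H R = leg13 k H R * leg23 k H R) :
    (Coalgebra.counit (R := k) (A := H)).rTensor H R = (1 : k) ⊗ₜ (1 : H) := by
  have hfix : ((1 : H) ⊗ₜ[k] counitLeft k H R) * R = R := by
    simpa only [map_mul, counitLeg1_comulId, counitLeg1_leg13, counitLeg1_leg23]
      using (congrArg (counitLeg1 k H) hex).symm
  rw [hR.mul_eq_right, Algebra.TensorProduct.one_def] at hfix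
  have hR1 : counitLeft k H R = 1 := by simpa using congrArg (counitLeft k H) hfix
  apply (TensorProduct.lid k H).injective
  simpa [counitLeft] using hR1

lemma lTensor_counit_eq_of_idComul_eq {R : H ⊗[k] H} (hR : IsUnit R)
    (hex : idComul k H R = leg13 k H R * leg12 k H R) :
    (Coalgebra.counit (R := k) (A := H)).lTensor H R = (1 : H) ⊗ₜ (1 : k) := by
  have hfix : (counitRight k H R ⊗ₜ[k] (1 : H)) * R = R := by
    simpa only [map_mul, counitLeg3_idComul, counitLeg3_leg13, counitLeg3_leg12]
      using (congrArg (counitLeg3 k H) hex).symm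
  rw [hR.mul_eq_right, Algebra.TensorProduct.one_def] at hfix
  have hR1 : counitRight k H R = 1 := by simpa using congrArg (counitRight k H) hfix
  apply (TensorProduct.rid k H).injective
  simpa [counitRight] using hR1

lemma swapLeg12_leg12 (x : H ⊗[k] H) :
    swapLeg12 k H (leg12 k H x) = leg12 k H (swapT k H x) := by
  induction x using TensorProduct.induction_on with
  | zero => simp
  | tmul a b => simp [leg12, swapT]
  | add x y hx hy => simp [hx, hy]

lemma swapLeg12_leg13 (x : H ⊗[k] H) : swapLeg12 k H (leg13 k H x) = leg23 k H x := by
  induction x using TensorProduct.induction_on with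
  | zero => simp
  | tmul a b => simp [leg13, leg23]
  | add x y hx hy => simp [hx, hy]

lemma swapLeg12_leg23 (x : H ⊗[k] H) : swapLeg12 k H (leg23 k H x) = leg13 k H x := by
  induction x using TensorProduct.induction_on with
  | zero => simp
  | tmul a b => simp [leg13, leg23]
  | add x y hx hy => simp [hx, hy]

lemma assoc_tmul_eq_leg12_mul (y : H ⊗[k] H) (c : H) :
    Algebra.TensorProduct.assoc k k k H H H (y ⊗ₜ c) = leg12 k H y * (1 ⊗ₜ (1 ⊗ₜ c)) := by
  induction y using TensorProduct.induction_on with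
  | zero => simp
  | tmul a b => simp [leg12]
  | add y z hy hz => simp [TensorProduct.add_tmul, add_mul, hy, hz]

lemma commute_leg12_one_tmul_one_tmul (y : H ⊗[k] H) (c : H) :
    Commute (leg12 k H y) (1 ⊗ₜ (1 ⊗ₜ c)) := by
  induction y using TensorProduct.induction_on with
  | zero => simp
  | tmul a b => simp [leg12, Commute, SemiconjBy]
  | add y z hy hz => simpa using hy.add_left hz

lemma leg12_mul_comulId {R : H ⊗[k] H}
    (hR : ∀ h : H, swapT k H (Coalgebra.comul (R := k) h) * R = R * Coalgebra.comul (R := k) h)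
    (x : H ⊗[k] H) :
    leg12 k H R * comulId k H x = swapLeg12 k H (comulId k H x) * leg12 k H R := by
  induction x using TensorProduct.induction_on with
  | zero => simp
  | tmul a c =>
    rw [comulId_tmul, assoc_tmul_eq_leg12_mul, map_mul, swapLeg12_leg12, swapLeg12_tmul,
      ← mul_assoc, ← map_mul, ← hR, map_mul, mul_assoc, mul_assoc,
      (commute_leg12_one_tmul_one_tmul R c).eq]
  | add x y hx hy => simp [mul_add, add_mul, hx, hy]

end

/-- every quasitriangular structure `R` on a bialgebra `H` is a Drinfel'd twist:
`(ε⊗Id)(R) = 1 = (Id⊗ε)(R)` and `R₁₂ · (Δ⊗Id)(R) = R₂₃ · (Id⊗Δ)(R)`. -/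
theorem quasitriangular_is_twist (Q : QT k H) :
    LinearMap.rTensor H (Coalgebra.counit (R := k) (A := H)) Q.R = (1 : k) ⊗ₜ[k] (1 : H) ∧
    LinearMap.lTensor H (Coalgebra.counit (R := k) (A := H)) Q.R = (1 : H) ⊗ₜ[k] (1 : k) ∧
    leg12 k H Q.R * comulId k H Q.R = leg23 k H Q.R * idComul k H Q.R := by
  have hR : IsUnit Q.R := ⟨⟨Q.R, Q.Rinv, Q.mul_inv, Q.inv_mul⟩, rfl⟩
  refine ⟨rTensor_counit_eq_of_comulId_eq hR Q.hex2,
    lTensor_counit_eq_of_idComul_eq hR Q.hex1, ?_⟩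
  calc leg12 k H Q.R * comulId k H Q.R
      = swapLeg12 k H (comulId k H Q.R) * leg12 k H Q.R := leg12_mul_comulId Q.quasi_cocomm Q.R
    _ = leg23 k H Q.R * leg13 k H Q.R * leg12 k H Q.R := by
      rw [Q.hex2, map_mul, swapLeg12_leg13, swapLeg12_leg23]
    _ = leg23 k H Q.R * idComul k H Q.R := by rw [Q.hex1, mul_assoc]

end
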